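/- arXiv:1101.4999 — 4 statements merged into one kernel-verified Lean document; each statement's English description precedes it below -/
import Mathlib

section
/- Let F be a field and F(X_1,...,X_m) a nonzero polynomial whose leading monomial with respect to a lexicographic ordering is X_1^{i_1}⋯X_m^{i_m}. Let S_1,...,S_m ⊆ F be finite sets with |S_j| = s_j and i_j ≤ s_j for all j. Then the number of zeros of F in S_1 × ... × S_m is at most s_1⋯s_m − (s_1−i_1)(s_2−i_2)⋯(s_m−i_m). -/
/-!
Induct on the number of variables, viewing `f` as a polynomial in `X_1` over
`F[X_2, …, X_m]`. Lex-leadingness of `X^i` forces this polynomial to have degree at most `i_1`,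
and its coefficient `c` of `X_1^{i_1}` has lex-leading monomial `X_2^{i_2} ⋯ X_m^{i_m}`. Over a
point `y ∈ S_2 × ⋯ × S_m` with `c(y) ≠ 0` the fibre contains at most `i_1` zeros; over the at most
`s_2 ⋯ s_m - (s_2 - i_2) ⋯ (s_m - i_m)` points with `c(y) = 0` (induction) it has at most `s_1`.
-/

open Finset

namespace Finsupp
variable {N : Type*} [Zero N] [LinearOrder N] {n : ℕ} {a b : Fin (n + 1) →₀ N}

lemma apply_zero_le_of_toLex_le (h : toLex a ≤ toLex b) : a 0 ≤ b 0 := by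
  obtain rfl | hlt := eq_or_lt_of_le h
  · rfl
  obtain ⟨j, hj, hjlt⟩ := lex_def.mp hlt
  obtain rfl | hj0 := eq_or_ne j 0
  · exact hjlt.le
  · exact (hj 0 (Fin.pos_of_ne_zero hj0)).le

lemma toLex_tail_le_of_toLex_le (h : toLex a ≤ toLex b) (h0 : a 0 = b 0) :
    toLex a.tail ≤ toLex b.tail := by
  obtain rfl | hlt := eq_or_lt_of_le h
  · rfl
  obtain ⟨j, hj, hjlt⟩ := lex_def.mp hlt
  obtain rfl | ⟨j, rfl⟩ := Fin.eq_zero_or_eq_succ j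
  · exact absurd h0 hjlt.ne
  refine le_of_lt (lex_def.mpr ⟨j, fun k hk => ?_, ?_⟩)
  · simpa [tail_apply] using hj k.succ (Fin.succ_lt_succ_iff.mpr hk)
  · simpa [tail_apply] using hjlt

end Finsupp

namespace Finset

lemma card_filter_piFinset_eq_sum_card_filter_cons {n : ℕ} {α : Fin (n + 1) → Type*}
    (S : ∀ i, Finset (α i)) (P : (∀ i, α i) → Prop) [DecidablePred P] :
    #{x ∈ Fintype.piFinset S | P x} =
      ∑ y ∈ Fintype.piFinset (Fin.tail S), #{a ∈ S 0 | P (Fin.cons a y)} := by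
  classical
  rw [card_eq_sum_card_fiberwise (f := Fin.tail) fun x hx => ?_]
  · refine sum_congr rfl fun y hy => card_nbij' (· 0) (Fin.cons · y) ?_ ?_ ?_ ?_
    · intro x hx
      simp only [coe_filter, Set.mem_ofPred_eq, mem_filter] at hx ⊢
      obtain ⟨⟨hxS, hPx⟩, rfl⟩ := hx
      exact ⟨Fintype.mem_piFinset.mp hxS 0, by simpa using hPx⟩
    · intro a ha
      simp only [coe_filter, Set.mem_ofPred_eq, mem_filter] at ha ⊢
      rw [Fin.mem_piFinset_iff_zero_tail, Fin.cons_zero, Fin.tail_cons]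
      exact ⟨⟨⟨ha.1, hy⟩, ha.2⟩, rfl⟩
    · intro x hx
      simp only [coe_filter, Set.mem_ofPred_eq, mem_filter] at hx
      obtain ⟨-, rfl⟩ := hx
      exact Fin.cons_self_tail x
    · intro a _
      exact Fin.cons_zero _ _
  · exact (Fin.mem_piFinset_iff_zero_tail.mp (mem_filter.mp hx).1).2

end Finset

namespace MvPolynomial
variable {R : Type*}

section CommSemiring
variable [CommSemiring R] {n : ℕ} {f : MvPolynomial (Fin (n + 1)) R} {i : Fin (n + 1) →₀ ℕ}

lemma natDegree_finSuccEquiv_le_of_toLex_le (hlead : ∀ j ∈ f.support, toLex j ≤ toLex i) :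
    (finSuccEquiv R n f).natDegree ≤ i 0 := by
  refine Polynomial.natDegree_le_iff_coeff_eq_zero.mpr fun k hk => ?_
  by_contra hk0
  obtain ⟨j, hj⟩ := ne_zero_iff.mp hk0
  have hmem := mem_support_coeff_finSuccEquiv.mp (mem_support_iff.mpr hj)
  have := Finsupp.apply_zero_le_of_toLex_le (hlead _ hmem)
  rw [Finsupp.cons_zero] at this
  omega

lemma toLex_le_tail_of_mem_support_coeff_finSuccEquiv
    (hlead : ∀ j ∈ f.support, toLex j ≤ toLex i) :
    ∀ j ∈ ((finSuccEquiv R n f).coeff (i 0)).support, toLex j ≤ toLex i.tail := by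
  intro j hj
  have h := hlead _ (mem_support_coeff_finSuccEquiv.mp hj)
  simpa using Finsupp.toLex_tail_le_of_toLex_le h (by simp)

end CommSemiring

section IsDomain
variable [CommRing R] [IsDomain R] [DecidableEq R] {n : ℕ} {f : MvPolynomial (Fin (n + 1)) R}
  {d : ℕ}

lemma card_filter_eval_cons_eq_zero_le (hd : (finSuccEquiv R n f).natDegree ≤ d)
    {y : Fin n → R} (hy : eval y ((finSuccEquiv R n f).coeff d) ≠ 0) (s : Finset R) :
    #{a ∈ s | eval (Fin.cons a y) f = 0} ≤ d := by
  set g := (finSuccEquiv R n f).map (eval y)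
  have hgd : g.coeff d ≠ 0 := by rwa [Polynomial.coeff_map]
  have hg : g ≠ 0 := fun h => hgd (by rw [h, Polynomial.coeff_zero])
  refine (Polynomial.card_le_degree_of_subset_roots (p := g) fun a ha => ?_).trans
    (Polynomial.natDegree_map_le.trans hd)
  rw [mem_val, mem_filter, eval_eq_eval_mv_eval'] at ha
  exact (Polynomial.mem_roots hg).mpr ha.2

lemma card_zeros_le_of_natDegree_finSuccEquiv_le (hd : (finSuccEquiv R n f).natDegree ≤ d)
    (S : Fin (n + 1) → Finset R) :
    #{x ∈ Fintype.piFinset S | eval x f = 0} ≤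
      #(S 0) * #{y ∈ Fintype.piFinset (Fin.tail S) | eval y ((finSuccEquiv R n f).coeff d) = 0}
      + d * (∏ j : Fin n, #(S j.succ) -
        #{y ∈ Fintype.piFinset (Fin.tail S) | eval y ((finSuccEquiv R n f).coeff d) = 0}) := by
  set T := Fintype.piFinset (Fin.tail S)
  set c := (finSuccEquiv R n f).coeff d
  rw [card_filter_piFinset_eq_sum_card_filter_cons]
  calc _ ≤ ∑ y ∈ T, if eval y c = 0 then #(S 0) else d := sum_le_sum fun y _ => ?_
    _ = _ := by
      have := card_filter_add_card_filter_not (s := T) (fun y => eval y c = 0)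
      have hT : #T = ∏ j : Fin n, #(S j.succ) := Fintype.card_piFinset _
      rw [sum_ite, sum_const, sum_const, smul_eq_mul, smul_eq_mul, mul_comm, mul_comm d, ← hT]
      congr 2
      omega
  split_ifs with hy
  · exact card_filter_le _ _
  · exact card_filter_eval_cons_eq_zero_le hd hy _

end IsDomain

end MvPolynomial

/-- The left side equals `d * T + (s - d) * N`, which is monotone in `N`. -/
lemma Nat.mul_add_mul_sub_le_mul_sub_mul {s d T P N : ℕ} (hd : d ≤ s) (hP : P ≤ T)
    (hN : N ≤ T - P) : s * N + d * (T - N) ≤ s * T - (s - d) * P := by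
  have hNT : N ≤ T := hN.trans (Nat.sub_le _ _)
  have hsd : (s - d) * P ≤ s * T := Nat.mul_le_mul (Nat.sub_le _ _) hP
  zify [hd, hP, hNT, hsd] at hN ⊢
  nlinarith

theorem footprint_bound_general {F : Type*} [Field F] [DecidableEq F] {m : ℕ}
    (f : MvPolynomial (Fin m) F) (i : Fin m →₀ ℕ)
    (hcoeff : MvPolynomial.coeff i f ≠ 0)
    (hlead : ∀ j ∈ f.support, toLex j ≤ toLex i)
    (S : Fin m → Finset F) (hi : ∀ j, i j ≤ (S j).card) :
    ((Fintype.piFinset S).filter (fun p => MvPolynomial.eval p f = 0)).card ≤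
      ∏ j, (S j).card - ∏ j, ((S j).card - i j) := by
  induction m with
  | zero =>
    obtain rfl : i = 0 := Subsingleton.elim _ _
    rw [f.eq_C_of_isEmpty, MvPolynomial.coeff_zero_C] at hcoeff
    rw [f.eq_C_of_isEmpty]
    simp [hcoeff]
  | succ n ih =>
    have hc := ih ((MvPolynomial.finSuccEquiv F n f).coeff (i 0)) i.tail
      (by rwa [MvPolynomial.finSuccEquiv_coeff_coeff, Finsupp.cons_tail])
      (MvPolynomial.toLex_le_tail_of_mem_support_coeff_finSuccEquiv hlead) (Fin.tail S)
      (fun j => hi j.succ)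
    calc _ ≤ _ := MvPolynomial.card_zeros_le_of_natDegree_finSuccEquiv_le
          (MvPolynomial.natDegree_finSuccEquiv_le_of_toLex_le hlead) S
      _ ≤ _ := Nat.mul_add_mul_sub_le_mul_sub_mul (hi 0)
          (prod_le_prod' fun j _ => Nat.sub_le _ _) hc
      _ = _ := by simp only [Fin.prod_univ_succ, Finsupp.tail_apply]

/-- **footprint bound.** If the leading monomial of a nonzero polynomial `f`
with respect to the lexicographic ordering (with `X_m ≺ ⋯ ≺ X_1`) is `X_1^{i_1} ⋯ X_m^{i_m}`
with `i_j ≤ s_j`, then `f` has at most `s_1 ⋯ s_m − (s_1 − i_1) ⋯ (s_m − i_m)` zeros in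
`S_1 × ⋯ × S_m`. -/
theorem footprint_bound {F : Type*} [Field F] [DecidableEq F] {m : ℕ}
    (f : MvPolynomial (Fin m) F) (hf : f ≠ 0) (i : Fin m →₀ ℕ)
    (hcoeff : MvPolynomial.coeff i f ≠ 0)
    (hlead : ∀ j ∈ f.support, toLex j ≤ toLex i)
    (S : Fin m → Finset F) (hi : ∀ j, i j ≤ (S j).card) :
    ((Fintype.piFinset S).filter (fun p => MvPolynomial.eval p f = 0)).card ≤
      ∏ j, (S j).card - ∏ j, ((S j).card - i j) :=
  footprint_bound_general f i hcoeff hlead S hi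
end

section
/- Let F be a field and F(X) ∈ F[X_1,...,X_m] nonzero with leading monomial X_1^{i_1}⋯X_m^{i_m} with respect to a lexicographic ordering. For finite sets S_1,...,S_m ⊆ F with |S_j| = s_j, the sum over all points a ∈ S_1 × ... × S_m of mult(F, a) is at most i_1 s_2⋯s_m + s_1 i_2 s_3⋯s_m + ... + s_1⋯s_{m−1} i_m, where mult(F,a) is the multiplicity of F at a defined via Hasse derivatives. -/
/-!
Induct on `m`, splitting off the lex-largest variable `X₀`. As a polynomial in `X₀`, `f` has
degree `i₀`, and its leading coefficient `P ∈ F[X₁, …, X_m]` has lex-leading exponent `tail i`.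
Fix `b ∈ S₂ × ⋯ × S_m` and choose `k` of order at most `mult(P, b)` with `(∂ᵏ P)(b) ≠ 0`.
Then `g(x) = (∂^{(0,k)} f)(x, b)` is a nonzero univariate polynomial of degree at most `i₀`
whose `t`-th Hasse derivative at `a` is `(∂^{(t,k)} f)(a, b)`, so `g` vanishes to order at
least `mult(f, (a, b)) - |k|` at every `a`. Counting roots of `g` gives
`∑_{a ∈ S₁} mult(f, (a, b)) ≤ i₀ + s₁ · mult(P, b)`; summing over `b` and applying the
induction hypothesis to `P` yields the bound.
-/

/-- The `k`-th Hasse derivative of a multivariate polynomial `f`: the coefficient of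
`T^k` in `f(X + T)`. -/
noncomputable def hasseDeriv {F : Type*} [CommRing F] {m : ℕ} (k : Fin m →₀ ℕ)
    (f : MvPolynomial (Fin m) F) : MvPolynomial (Fin m) F :=
  MvPolynomial.coeff k
    (MvPolynomial.eval₂ (MvPolynomial.C.comp MvPolynomial.C)
      (fun j => MvPolynomial.X j + MvPolynomial.C (MvPolynomial.X j)) f)

def HasMultAtLeast {F : Type*} [CommRing F] {m : ℕ} (f : MvPolynomial (Fin m) F)
    (a : Fin m → F) (r : ℕ) : Prop :=
  ∀ k : Fin m →₀ ℕ, (∑ j, k j) < r → MvPolynomial.eval a (hasseDeriv k f) = 0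

noncomputable def multAt {F : Type*} [CommRing F] {m : ℕ} (f : MvPolynomial (Fin m) F)
    (a : Fin m → F) : ℕ :=
  sSup {r | HasMultAtLeast f a r}

open MvPolynomial Finset

namespace MvPolynomial

variable {R σ : Type*} [CommRing R]

theorem X_add_C_X_pow_eq_sum (i : σ) (e : ℕ) :
    ((X i + C (X i)) ^ e : MvPolynomial σ (MvPolynomial σ R)) =
      ∑ t ∈ range (e + 1),
        monomial (Finsupp.single i t) ((e.choose t : MvPolynomial σ R) * X i ^ (e - t)) := by
  rw [add_pow]
  refine sum_congr rfl fun t _ => ?_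
  rw [X_pow_eq_monomial, ← map_pow, ← map_natCast (C : MvPolynomial σ R →+* _), mul_assoc,
    ← map_mul, mul_comm, C_mul_monomial, mul_one, mul_comm]

theorem coeff_prod_X_add_C_X_pow [Fintype σ] [DecidableEq σ] (j k : σ →₀ ℕ) :
    coeff k (∏ i, (X i + C (X i)) ^ j i : MvPolynomial σ (MvPolynomial σ R)) =
      monomial (j - k) ((∏ i, (j i).choose (k i) : ℕ) : R) := by
  simp_rw [X_add_C_X_pow_eq_sum, prod_univ_sum, ← monomial_sum_prod, coeff_sum,
    coeff_monomial, ← Finsupp.equivFunOnFinite_symm_eq_sum, Equiv.symm_apply_eq,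
    sum_ite_eq', Fintype.mem_piFinset, mem_range, Nat.lt_succ_iff]
  split_ifs with hkj
  · rw [monomial_eq, Finsupp.prod_fintype _ _ fun _ => pow_zero _, Nat.cast_prod, map_prod,
      ← prod_mul_distrib]
    simp [Finsupp.equivFunOnFinite_apply]
  · obtain ⟨i, hi⟩ := not_forall.mp hkj
    rw [prod_eq_zero (mem_univ i) (Nat.choose_eq_zero_of_lt (not_le.mp hi)), Nat.cast_zero,
      map_zero]

end MvPolynomial

section HasseDeriv

variable {R : Type*} [CommRing R] {m : ℕ}

theorem hasseDeriv_add (k : Fin m →₀ ℕ) (p q : MvPolynomial (Fin m) R) :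
    hasseDeriv k (p + q) = hasseDeriv k p + hasseDeriv k q := by
  simp only [hasseDeriv, eval₂_add, coeff_add]

theorem hasseDeriv_monomial (k j : Fin m →₀ ℕ) (c : R) :
    hasseDeriv k (monomial j c) =
      monomial (j - k) (((∏ i, (j i).choose (k i) : ℕ) : R) * c) := by
  rw [hasseDeriv, eval₂_monomial, RingHom.comp_apply, coeff_C_mul,
    Finsupp.prod_fintype _ _ fun _ => pow_zero _, coeff_prod_X_add_C_X_pow, C_mul_monomial,
    mul_comm]

theorem coeff_hasseDeriv (k n : Fin m →₀ ℕ) (f : MvPolynomial (Fin m) R) :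
    coeff n (hasseDeriv k f) =
      ((∏ i, ((n + k) i).choose (k i) : ℕ) : R) * coeff (n + k) f := by
  induction f using MvPolynomial.induction_on' with
  | monomial j c =>
    rw [hasseDeriv_monomial, coeff_monomial, coeff_monomial]
    by_cases hj : j = n + k
    · simp [hj]
    · rw [if_neg hj, mul_zero, ite_eq_right_iff]
      intro hjk
      have hkj : ¬ k ≤ j := fun hkj => hj (by rw [← hjk, tsub_add_cancel_of_le hkj])
      obtain ⟨i, hi⟩ := not_forall.mp (mt Finsupp.le_def.mpr hkj)
      rw [prod_eq_zero (mem_univ i) (Nat.choose_eq_zero_of_lt (not_le.mp hi)), Nat.cast_zero,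
        zero_mul]
  | add p q hp hq => rw [hasseDeriv_add, coeff_add, hp, hq, coeff_add, mul_add]

theorem hasseDeriv_eq_C_of_forall_degree_le {f : MvPolynomial (Fin m) R} {j : Fin m →₀ ℕ}
    (hj : ∀ d ∈ f.support, d.degree ≤ j.degree) : hasseDeriv j f = C (coeff j f) := by
  ext n
  rw [coeff_hasseDeriv, coeff_C]
  split_ifs with hn
  · simp [← hn]
  · rw [notMem_support_iff.mp fun h => ?_, mul_zero]
    have := hj _ h
    rw [map_add] at this
    exact hn ((Finsupp.degree_eq_zero_iff n).mp (by omega)).symm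

end HasseDeriv

section Multiplicity

variable {R : Type*} [CommRing R] {m : ℕ} {f : MvPolynomial (Fin m) R} {a : Fin m → R}

theorem HasMultAtLeast.le_totalDegree (hf : f ≠ 0) {r : ℕ} (h : HasMultAtLeast f a r) :
    r ≤ f.totalDegree := by
  obtain ⟨j, hj, hmax⟩ := f.support.exists_max_image Finsupp.degree (support_nonempty.mpr hf)
  refine le_trans (not_lt.mp fun hlt => ?_) (MvPolynomial.le_totalDegree hj)
  have := h j (by rwa [← Finsupp.degree_eq_sum])
  rw [hasseDeriv_eq_C_of_forall_degree_le hmax, eval_C] at this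
  exact mem_support_iff.mp hj this

theorem bddAbove_hasMultAtLeast (hf : f ≠ 0) : BddAbove {r | HasMultAtLeast f a r} :=
  ⟨_, fun _ => HasMultAtLeast.le_totalDegree hf⟩

theorem hasMultAtLeast_multAt (hf : f ≠ 0) : HasMultAtLeast f a (multAt f a) :=
  Nat.sSup_mem ⟨0, fun _ h => absurd h (Nat.not_lt_zero _)⟩ (bddAbove_hasMultAtLeast hf)

theorem multAt_le_totalDegree (hf : f ≠ 0) : multAt f a ≤ f.totalDegree :=
  (hasMultAtLeast_multAt hf).le_totalDegree hf

theorem exists_eval_hasseDeriv_ne_zero (hf : f ≠ 0) :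
    ∃ k : Fin m →₀ ℕ, ∑ j, k j ≤ multAt f a ∧ eval a (hasseDeriv k f) ≠ 0 := by
  have : ¬ HasMultAtLeast f a (multAt f a + 1) := fun h =>
    (le_csSup (bddAbove_hasMultAtLeast hf) h).not_gt (Nat.lt_succ_self _)
  obtain ⟨k, hk, hne⟩ := not_forall₂.mp this
  exact ⟨k, Nat.lt_succ_iff.mp hk, hne⟩

end Multiplicity

namespace Polynomial

theorem le_rootMultiplicity_of_hasseDeriv_eval_eq_zero {R : Type*} [CommRing R] {p : R[X]}
    (hp : p ≠ 0) {a : R} {r : ℕ} (h : ∀ t < r, (hasseDeriv t p).eval a = 0) :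
    r ≤ rootMultiplicity a p := by
  rw [rootMultiplicity_eq_natTrailingDegree, ← taylor_apply]
  refine le_natTrailingDegree (by rwa [Ne, taylor_eq_zero]) fun t ht => ?_
  rw [taylor_coeff]
  exact h t ht

theorem sum_rootMultiplicity_le_natDegree {R : Type*} [CommRing R] [IsDomain R] (p : R[X])
    (S : Finset R) : ∑ a ∈ S, rootMultiplicity a p ≤ p.natDegree := by
  classical
  calc ∑ a ∈ S, p.rootMultiplicity a = ∑ a ∈ S, p.roots.count a := by simp_rw [count_roots]
    _ ≤ ∑ a ∈ S ∪ p.roots.toFinset, p.roots.count a := sum_le_sum_of_subset subset_union_left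
    _ = Multiset.card p.roots := Multiset.sum_count_eq_card fun a ha =>
        mem_union_right _ (Multiset.mem_toFinset.mpr ha)
    _ ≤ p.natDegree := card_roots' p

end Polynomial

namespace Finsupp

variable {M : Type*} {n : ℕ}

theorem cons_add_cons [AddZeroClass M] (x y : M) (s t : Fin n →₀ M) :
    cons x s + cons y t = cons (x + y) (s + t) := by
  ext j
  cases j using Fin.cases <;> simp

theorem sum_univ_cons [AddCommMonoid M] (x : M) (s : Fin n →₀ M) :
    ∑ j, cons x s j = x + ∑ j, s j := by
  simp [Fin.sum_univ_succ]

variable [Zero M] [PartialOrder M]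

theorem apply_zero_le_of_toLex_le_s8 {s t : Fin (n + 1) →₀ M} (h : toLex s ≤ toLex t) :
    s 0 ≤ t 0 := by
  obtain h | h := h.lt_or_eq
  · obtain ⟨w, hw, hlt⟩ := Lex.lt_iff.mp h
    obtain rfl | hw0 := eq_or_ne w 0
    · exact hlt.le
    · exact (hw 0 (Fin.pos_of_ne_zero hw0)).le
  · rw [toLex_inj.mp h]

theorem toLex_le_of_toLex_cons_le_cons {x : M} {s t : Fin n →₀ M}
    (h : toLex (cons x s) ≤ toLex (cons x t)) : toLex s ≤ toLex t := by
  obtain h | h := h.lt_or_eq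
  · obtain ⟨w, hw, hlt⟩ := Lex.lt_iff.mp h
    cases w using Fin.cases with
    | zero => exact absurd hlt (by simp)
    | succ w =>
      refine (Lex.lt_iff.mpr ⟨w, fun j hj => ?_, by simpa using hlt⟩).le
      simpa using hw j.succ (Fin.succ_lt_succ_iff.mpr hj)
  · rw [cons_right_injective x (toLex_inj.mp h)]

end Finsupp

theorem Finset.sum_piFinset_succ_eq_sum_sum_cons {α β : Type*} [AddCommMonoid β] {m : ℕ}
    (S : Fin (m + 1) → Finset α) (φ : (Fin (m + 1) → α) → β) :
    ∑ p ∈ Fintype.piFinset S, φ p =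
      ∑ a ∈ S 0, ∑ b ∈ Fintype.piFinset (fun j => S j.succ), φ (Fin.cons a b) := by
  rw [← sum_product']
  refine sum_equiv (Fin.consEquiv fun _ => α).symm (fun p => ?_) fun p _ => ?_
  · simp [Fin.forall_fin_succ, Fin.tail]
  · simp

theorem Finset.sum_mul_prod_erase_fin_succ {M : Type*} [CommSemiring M] {m : ℕ}
    (c s : Fin (m + 1) → M) :
    ∑ j, c j * ∏ l ∈ univ.erase j, s l =
      c 0 * ∏ l : Fin m, s l.succ + s 0 * ∑ j : Fin m, c j.succ * ∏ l ∈ univ.erase j, s l.succ := by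
  have prod_erase {n : ℕ} (s : Fin n → M) (j : Fin n) :
      ∏ l ∈ univ.erase j, s l = ∏ l, Function.update s j 1 l := by
    rw [prod_update_of_mem (mem_univ j), one_mul, sdiff_singleton_eq_erase]
  simp_rw [prod_erase, Fin.sum_univ_succ, Fin.prod_univ_succ, mul_sum,
    Function.update_of_ne (Fin.succ_ne_zero _).symm, Function.update_self, one_mul]
  congr 1
  refine sum_congr rfl fun j _ => ?_
  have := Function.update_comp_eq_of_injective s (Fin.succ_injective m) j (1 : M)
  simp only [Function.comp_def] at this
  rw [← this]
  ring

def IsLexLeadingExponent {R σ : Type*} [CommSemiring R] [LinearOrder σ]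
    (f : MvPolynomial σ R) (i : σ →₀ ℕ) : Prop :=
  coeff i f ≠ 0 ∧ ∀ j ∈ f.support, toLex j ≤ toLex i

section Slice

variable {R : Type*} [CommRing R] {m : ℕ}

theorem coeff_finSuccEquiv_hasseDeriv_cons (t e : ℕ) (k : Fin m →₀ ℕ)
    (f : MvPolynomial (Fin (m + 1)) R) :
    (finSuccEquiv R m (hasseDeriv (Finsupp.cons t k) f)).coeff e =
      ((e + t).choose t : MvPolynomial (Fin m) R) *
        hasseDeriv k ((finSuccEquiv R m f).coeff (e + t)) := by
  ext n
  rw [finSuccEquiv_coeff_coeff, coeff_hasseDeriv, ← map_natCast C, coeff_C_mul, coeff_hasseDeriv,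
    finSuccEquiv_coeff_coeff, Finsupp.cons_add_cons, Fin.prod_univ_succ]
  simp only [Finsupp.cons_zero, Finsupp.cons_succ, Nat.cast_mul]
  ring

/-- `(finSuccEquiv R m f).map (eval b)` is the slice `x ↦ f(x, b)`. -/
theorem hasseDeriv_map_eval_finSuccEquiv (t : ℕ) (k : Fin m →₀ ℕ) (b : Fin m → R)
    (f : MvPolynomial (Fin (m + 1)) R) :
    Polynomial.hasseDeriv t ((finSuccEquiv R m (hasseDeriv (Finsupp.cons 0 k) f)).map (eval b)) =
      (finSuccEquiv R m (hasseDeriv (Finsupp.cons t k) f)).map (eval b) := by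
  ext e
  simp [Polynomial.hasseDeriv_coeff, coeff_finSuccEquiv_hasseDeriv_cons]

theorem sum_multAt_cons_le [IsDomain R] {f : MvPolynomial (Fin (m + 1)) R} (hf : f ≠ 0)
    (b : Fin m → R) (S : Finset R) :
    ∑ a ∈ S, multAt f (Fin.cons a b) ≤
      (finSuccEquiv R m f).natDegree + #S * multAt (finSuccEquiv R m f).leadingCoeff b := by
  set φ := finSuccEquiv R m f
  have hφ : φ.leadingCoeff ≠ 0 := by simpa [φ] using hf
  obtain ⟨k, hk, hne⟩ := exists_eval_hasseDeriv_ne_zero (a := b) hφ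
  set g := (finSuccEquiv R m (hasseDeriv (Finsupp.cons 0 k) f)).map (eval b)
  have hg_coeff (e : ℕ) : g.coeff e = eval b (hasseDeriv k (φ.coeff e)) := by
    simp [g, φ, coeff_finSuccEquiv_hasseDeriv_cons]
  have hg : g ≠ 0 := fun h => hne <| by
    rw [Polynomial.leadingCoeff, ← hg_coeff, h, Polynomial.coeff_zero]
  have hg_deg : g.natDegree ≤ φ.natDegree :=
    Polynomial.natDegree_le_iff_coeff_eq_zero.mpr fun e he => by
      rw [hg_coeff, Polynomial.coeff_eq_zero_of_natDegree_lt he]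
      simp [hasseDeriv]
  have hmult (a : R) : multAt f (Fin.cons a b) - ∑ j, k j ≤ g.rootMultiplicity a := by
    refine Polynomial.le_rootMultiplicity_of_hasseDeriv_eval_eq_zero hg fun t ht => ?_
    rw [hasseDeriv_map_eval_finSuccEquiv, ← eval_eq_eval_mv_eval']
    exact hasMultAtLeast_multAt hf _ (by rw [Finsupp.sum_univ_cons]; omega)
  calc ∑ a ∈ S, multAt f (Fin.cons a b) ≤ ∑ a ∈ S, (g.rootMultiplicity a + ∑ j, k j) :=
        sum_le_sum fun a _ => by have := hmult a; omega
    _ = ∑ a ∈ S, g.rootMultiplicity a + #S * ∑ j, k j := by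
        rw [sum_add_distrib, sum_const, smul_eq_mul]
    _ ≤ φ.natDegree + #S * multAt φ.leadingCoeff b :=
        add_le_add ((Polynomial.sum_rootMultiplicity_le_natDegree g S).trans hg_deg)
          (Nat.mul_le_mul_left _ hk)

variable {f : MvPolynomial (Fin (m + 1)) R} {i : Fin (m + 1) →₀ ℕ}

theorem IsLexLeadingExponent.natDegree_finSuccEquiv (h : IsLexLeadingExponent f i) :
    (finSuccEquiv R m f).natDegree = i 0 := by
  rw [MvPolynomial.natDegree_finSuccEquiv]
  exact le_antisymm
    (degreeOf_le_iff.mpr fun j hj => Finsupp.apply_zero_le_of_toLex_le_s8 (h.2 j hj))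
    (monomial_le_degreeOf 0 (mem_support_iff.mpr h.1))

theorem IsLexLeadingExponent.leadingCoeff_finSuccEquiv (h : IsLexLeadingExponent f i) :
    IsLexLeadingExponent (finSuccEquiv R m f).leadingCoeff i.tail := by
  simp only [IsLexLeadingExponent, Polynomial.leadingCoeff, h.natDegree_finSuccEquiv,
    mem_support_iff, finSuccEquiv_coeff_coeff, Finsupp.cons_tail]
  refine ⟨h.1, fun n hn => Finsupp.toLex_le_of_toLex_cons_le_cons (x := i 0) ?_⟩
  rw [Finsupp.cons_tail]
  exact h.2 _ (mem_support_iff.mpr hn)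

end Slice

theorem IsLexLeadingExponent.sum_multAt_le {R : Type*} [CommRing R] [IsDomain R] {m : ℕ}
    {f : MvPolynomial (Fin m) R} {i : Fin m →₀ ℕ} (hi : IsLexLeadingExponent f i) (S : Fin m → Finset R) :
    ∑ p ∈ Fintype.piFinset S, multAt f p ≤ ∑ j, i j * ∏ l ∈ univ.erase j, #(S l) := by
  have hf : f ≠ 0 := ne_zero_iff.mpr ⟨i, hi.1⟩
  induction m with
  | zero =>
    refine (sum_le_sum fun p _ => multAt_le_totalDegree hf).trans_eq ?_
    simp [(totalDegree_eq_zero_iff (p := f)).mpr fun _ _ x => x.elim0]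
  | succ m ih =>
    set P := (finSuccEquiv R m f).leadingCoeff
    have hP : IsLexLeadingExponent P i.tail := hi.leadingCoeff_finSuccEquiv
    calc ∑ p ∈ Fintype.piFinset S, multAt f p
        = ∑ b ∈ Fintype.piFinset (fun j => S j.succ), ∑ a ∈ S 0, multAt f (Fin.cons a b) := by
          rw [sum_piFinset_succ_eq_sum_sum_cons, sum_comm]
      _ ≤ ∑ b ∈ Fintype.piFinset (fun j => S j.succ), (i 0 + #(S 0) * multAt P b) :=
          sum_le_sum fun b _ => (sum_multAt_cons_le hf b (S 0)).trans_eq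
            (by rw [hi.natDegree_finSuccEquiv])
      _ = i 0 * ∏ l : Fin m, #(S l.succ) +
            #(S 0) * ∑ b ∈ Fintype.piFinset (fun j => S j.succ), multAt P b := by
          rw [sum_add_distrib, sum_const, Fintype.card_piFinset, smul_eq_mul, mul_sum, mul_comm]
      _ ≤ i 0 * ∏ l : Fin m, #(S l.succ) +
            #(S 0) * ∑ j : Fin m, i.tail j * ∏ l ∈ univ.erase j, #(S l.succ) := by
          gcongr
          exact ih hP _ (ne_zero_iff.mpr ⟨_, hP.1⟩)
      _ = ∑ j, i j * ∏ l ∈ univ.erase j, #(S l) := by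
          simp only [sum_mul_prod_erase_fin_succ, Finsupp.tail_apply]

theorem sum_multiplicities_le_general {F : Type*} [Field F] {m : ℕ}
    (f : MvPolynomial (Fin m) F) (i : Fin m →₀ ℕ)
    (hcoeff : MvPolynomial.coeff i f ≠ 0)
    (hlead : ∀ j ∈ f.support, toLex j ≤ toLex i)
    (S : Fin m → Finset F) :
    ∑ p ∈ Fintype.piFinset S, multAt f p ≤
      ∑ j, i j * ∏ l ∈ Finset.univ.erase j, (S l).card :=
  IsLexLeadingExponent.sum_multAt_le ⟨hcoeff, hlead⟩ S

/-- If the leading monomial of a nonzero `f` with respect to the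
lexicographic ordering (with `X_m ≺ ⋯ ≺ X_1`) is `X_1^{i_1} ⋯ X_m^{i_m}`, then the sum over
all points `a ∈ S_1 × ⋯ × S_m` of the multiplicity of `f` at `a` is at most
`i_1 s_2 ⋯ s_m + s_1 i_2 s_3 ⋯ s_m + ⋯ + s_1 ⋯ s_{m−1} i_m`. -/
theorem sum_multiplicities_le {F : Type*} [Field F] {m : ℕ}
    (f : MvPolynomial (Fin m) F) (hf : f ≠ 0) (i : Fin m →₀ ℕ)
    (hcoeff : MvPolynomial.coeff i f ≠ 0)
    (hlead : ∀ j ∈ f.support, toLex j ≤ toLex i)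
    (S : Fin m → Finset F) :
    ∑ p ∈ Fintype.piFinset S, multAt f p ≤
      ∑ j, i j * ∏ l ∈ Finset.univ.erase j, (S l).card :=
  sum_multiplicities_le_general f i hcoeff hlead S
end

section
/- Given nonnegative integers i_1,...,i_m, positive integers s_1,...,s_m and r with ⌊i_1/s_1⌋ + ... + ⌊i_m/s_m⌋ ≥ r, and finite sets S_j ⊆ F with |S_j| = s_j, there exists a polynomial F ∈ F[X_1,...,X_m] with leading monomial X_1^{i_1}⋯X_m^{i_m} (with respect to any monomial ordering) such that every point of S_1 × ... × S_m is a zero of F of multiplicity at least r. -/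
/-!
Take `F = ∏ⱼ pⱼ(Xⱼ)` with `pⱼ = (∏_{b ∈ Sⱼ} (X - b))^⌊iⱼ/sⱼ⌋ · X^(iⱼ mod sⱼ)`, monic of degree
`iⱼ`. The coefficient of `X^k` in `F` is `∏ⱼ coeff_{kⱼ} pⱼ`, so every monomial of `F` divides
`X^i` and that coefficient is `1`. At a point `a ∈ S₁ × ⋯ × Sₘ`, each `pⱼ` is divisible by
`(X - aⱼ)^⌊iⱼ/sⱼ⌋`, hence `F(X + a)` is divisible by `∏ⱼ Xⱼ^⌊iⱼ/sⱼ⌋`, so its coefficients, which are the Hasse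
derivatives of `F` at `a`, vanish below total degree `∑ⱼ ⌊iⱼ/sⱼ⌋ ≥ r`.
-/

namespace Polynomial

open Finset

variable {R : Type*} [CommRing R]

noncomputable def nodalPow (s : Finset R) (n : ℕ) : R[X] :=
  Lagrange.nodal s id ^ (n / #s) * X ^ (n % #s)

theorem nodalPow_monic (s : Finset R) (n : ℕ) : (nodalPow s n).Monic :=
  (Lagrange.nodal_monic.pow _).mul (monic_X_pow _)

theorem natDegree_nodalPow [Nontrivial R] (s : Finset R) (n : ℕ) :
    (nodalPow s n).natDegree = n := by
  rw [nodalPow, (Lagrange.nodal_monic.pow _).natDegree_mul (monic_X_pow _),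
    Lagrange.nodal_monic.natDegree_pow, Lagrange.natDegree_nodal, natDegree_X_pow,
    Nat.div_add_mod']

theorem coeff_nodalPow_self [Nontrivial R] (s : Finset R) (n : ℕ) :
    (nodalPow s n).coeff n = 1 := by
  simpa [natDegree_nodalPow] using (nodalPow_monic s n).coeff_natDegree

theorem X_sub_C_pow_dvd_nodalPow {s : Finset R} {c : R} (hc : c ∈ s) (n : ℕ) :
    (X - C c) ^ (n / #s) ∣ nodalPow s n :=
  (pow_dvd_pow_of_dvd (Lagrange.X_sub_C_dvd_nodal id hc) _).mul_right _

end Polynomial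

namespace MvPolynomial

theorem coeff_prod_aeval_X {σ R : Type*} [CommSemiring R] [Fintype σ] [DecidableEq σ]
    (p : σ → Polynomial R) (k : σ →₀ ℕ) :
    coeff k (∏ j, Polynomial.aeval (X j) (p j)) = ∏ j, (p j).coeff (k j) := by
  -- summing up to `k j` as well puts `k` among the multi-indices of the expanded product
  have hp : ∀ j, Polynomial.aeval (X j : MvPolynomial σ R) (p j) =
      ∑ d ∈ Finset.range ((p j).natDegree + k j + 1),
        monomial (Finsupp.single j d) ((p j).coeff d) := fun j => by
    rw [Polynomial.aeval_eq_sum_range' (n := (p j).natDegree + k j + 1) (by omega)]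
    simp only [X_pow_eq_monomial, smul_monomial, smul_eq_mul, mul_one]
  simp_rw [hp, Finset.prod_univ_sum, ← monomial_sum_prod, coeff_sum, coeff_monomial]
  rw [Finset.sum_eq_single_of_mem (⇑k)]
  · simp [Finsupp.univ_sum_single]
  · simp [Fintype.mem_piFinset]
  · intro g _ hgk
    rw [if_neg]
    intro hk
    apply hgk
    funext j
    simp [← hk, Finsupp.finsetSum_apply, Finsupp.single_apply]

theorem X_pow_dvd_aeval_X_add_C {σ R : Type*} [CommRing R] {p : Polynomial R} {c : R} {n : ℕ}
    (h : (Polynomial.X - Polynomial.C c) ^ n ∣ p) (j : σ) :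
    X j ^ n ∣ Polynomial.aeval (X j + C c) p := by
  have := map_dvd (Polynomial.aeval (X j + C c)) h
  rwa [map_pow, map_sub, Polynomial.aeval_X, Polynomial.aeval_C, algebraMap_eq,
    add_sub_cancel_right] at this

end MvPolynomial

open MvPolynomial

section Multiplicity

variable {F : Type*} [CommRing F] {m : ℕ}

theorem eval_hasseDeriv (a : Fin m → F) (k : Fin m →₀ ℕ) (f : MvPolynomial (Fin m) F) :
    eval a (hasseDeriv k f) = coeff k (aeval (fun j => X j + C (a j)) f) := by
  rw [hasseDeriv, ← coeff_map, eval₂_comp_left, aeval_def]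
  congr 2
  · ext; simp
  · ext; simp

theorem hasMultAtLeast_of_prod_X_pow_dvd {f : MvPolynomial (Fin m) F} {a : Fin m → F}
    {e : Fin m → ℕ} {r : ℕ} (hdvd : ∏ j, X j ^ e j ∣ aeval (fun j => X j + C (a j)) f)
    (hr : r ≤ ∑ j, e j) : HasMultAtLeast f a r := by
  intro k hk
  obtain ⟨g, hg⟩ := hdvd
  have hmono : ∏ j, (X j ^ e j : MvPolynomial (Fin m) F) =
      monomial (∑ j, Finsupp.single j (e j)) 1 := by
    simp only [X_pow_eq_monomial, monomial_sum_one]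
  rw [eval_hasseDeriv, hg, hmono, coeff_monomial_mul', if_neg]
  intro hle
  have : ∑ j, e j ≤ ∑ j, k j := Finset.sum_le_sum fun j _ => by
    simpa [Finsupp.finsetSum_apply, Finsupp.single_apply] using hle j
  omega

end Multiplicity

theorem exists_poly_all_points_high_multiplicity_general {F : Type*} [Field F] {m : ℕ}
    (i : Fin m →₀ ℕ) (S : Fin m → Finset F)
    (r : ℕ) (h : r ≤ ∑ j, i j / (S j).card) :
    ∃ f : MvPolynomial (Fin m) F, f ≠ 0 ∧ MvPolynomial.coeff i f ≠ 0 ∧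
      (∀ mo : MonomialOrder (Fin m), ∀ j ∈ f.support, mo.toSyn j ≤ mo.toSyn i) ∧
      ∀ a ∈ Fintype.piFinset S, HasMultAtLeast f a r := by
  classical
  set p := fun j => Polynomial.nodalPow (S j) (i j)
  set f : MvPolynomial (Fin m) F := ∏ j, Polynomial.aeval (X j) (p j)
  have hcoeff : ∀ k, coeff k f = ∏ j, (p j).coeff (k j) := coeff_prod_aeval_X p
  have hi : coeff i f = 1 := by
    rw [hcoeff]
    exact Finset.prod_eq_one fun j _ => Polynomial.coeff_nodalPow_self _ _
  refine ⟨f, ne_zero_iff.mpr ⟨i, hi ▸ one_ne_zero⟩, hi ▸ one_ne_zero, ?_, ?_⟩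
  · intro mo k hk
    apply mo.toSyn_monotone
    intro j
    rw [mem_support_iff, hcoeff] at hk
    exact (Polynomial.le_natDegree_of_ne_zero (Finset.prod_ne_zero_iff.mp hk j (Finset.mem_univ j))).trans_eq
      (Polynomial.natDegree_nodalPow _ _)
  · intro a ha
    refine hasMultAtLeast_of_prod_X_pow_dvd ?_ h
    rw [map_prod]
    refine Finset.prod_dvd_prod_of_dvd _ _ fun j _ => ?_
    rw [← Polynomial.aeval_algHom_apply, aeval_X]
    exact X_pow_dvd_aeval_X_add_C
      (Polynomial.X_sub_C_pow_dvd_nodalPow (Fintype.mem_piFinset.mp ha j) _) j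

/-- If `⌊i_1/s_1⌋ + ⋯ + ⌊i_m/s_m⌋ ≥ r`, then there is a polynomial with
leading monomial `X_1^{i_1} ⋯ X_m^{i_m}` with respect to any monomial ordering, all of whose
points in `S_1 × ⋯ × S_m` are zeros of multiplicity at least `r`. -/
theorem exists_poly_all_points_high_multiplicity {F : Type*} [Field F] {m : ℕ}
    (i : Fin m →₀ ℕ) (S : Fin m → Finset F) (hS : ∀ j, 0 < (S j).card)
    (r : ℕ) (hr : 1 ≤ r) (h : r ≤ ∑ j, i j / (S j).card) :
    ∃ f : MvPolynomial (Fin m) F, f ≠ 0 ∧ MvPolynomial.coeff i f ≠ 0 ∧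
      (∀ mo : MonomialOrder (Fin m), ∀ j ∈ f.support, mo.toSyn j ≤ mo.toSyn i) ∧
      ∀ a ∈ Fintype.piFinset S, HasMultAtLeast f a r :=
  exists_poly_all_points_high_multiplicity_general i S r h
end

section
/- With D defined recursively as D(i_1, r, s_1) = min{⌊i_1/r⌋, s_1} and D(i_1,...,i_m, r, s_1,...,s_m) = max_{(u_1,...,u_r) ∈ A(i_m,r,s_m)} [(s_m − Σu_j)·D(i_1,...,i_{m−1}, r, ...) + Σ_{k=1}^{r−1} u_k·D(i_1,...,i_{m−1}, r−k, ...) + u_r s_1⋯s_{m−1}], it holds that D(i_1,...,i_m, r, s_1,...,s_m) ≤ (i_1 s_2⋯s_m + s_1 i_2 s_3⋯s_m + ... + s_1⋯s_{m−1} i_m)/r. -/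
/-- The recursive bound `D(i_1, …, i_m, r, s_1, …, s_m)` of Geil–Thomsen.
For `m = 1`, `D(i_1, r, s_1) = min{⌊i_1/r⌋, s_1}`; for `m ≥ 2` it is the maximum over
`(u_1, …, u_r)` with `u_1 + ⋯ + u_r ≤ s_m` and `u_1 + 2u_2 + ⋯ + r·u_r ≤ i_m` of
`(s_m − u_1 − ⋯ − u_r)·D(i_1,…,i_{m−1}, r, s_1,…,s_{m−1})
  + ∑_{k=1}^{r−1} u_k·D(i_1,…,i_{m−1}, r−k, s_1,…,s_{m−1}) + u_r·s_1⋯s_{m−1}`. -/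
def D : (m : ℕ) → (Fin m → ℕ) → ℕ → (Fin m → ℕ) → ℕ
  | 0, _, _, _ => 1
  | 1, i, r, s => min (i 0 / r) (s 0)
  | (m + 2), i, r, s =>
      Finset.sup
        ((Fintype.piFinset fun _ : Fin r => Finset.range (s (Fin.last (m + 1)) + 1)).filter
          (fun u => (∑ k, u k) ≤ s (Fin.last (m + 1)) ∧
            (∑ k : Fin r, ((k : ℕ) + 1) * u k) ≤ i (Fin.last (m + 1))))
        (fun u =>
          (s (Fin.last (m + 1)) - ∑ k, u k) *
              D (m + 1) (fun j => i j.castSucc) r (fun j => s j.castSucc) +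
            ∑ k : Fin r, u k *
              (if (k : ℕ) + 1 = r then ∏ j : Fin (m + 1), s j.castSucc
               else D (m + 1) (fun j => i j.castSucc) (r - ((k : ℕ) + 1))
                 (fun j => s j.castSucc)))

/-! Multiply through by `r` and argue in `ℕ`. Write `T` for the Schwartz–Zippel numerator of the
first `m - 1` coordinates and `P = s_1 ⋯ s_{m-1}`. By induction `r' · D(…, r', …) ≤ T` for every
`r'`, and `D ≤ P` always, so `r · D(…, r - k, …) ≤ T + k · P`. Hence `r` times the term of a
tuple `u` is at most `(s_m - ∑ u_k) T + ∑ u_k (T + k P) ≤ s_m T + i_m P`, which is the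
numerator for all `m` coordinates. -/

open Finset

theorem Fin.sum_mul_prod_erase_castSucc {R : Type*} [CommSemiring R] {n : ℕ}
    (a b : Fin (n + 1) → R) :
    ∑ j, a j * ∏ l ∈ univ.erase j, b l =
      b (Fin.last n) * ∑ j : Fin n, a j.castSucc * ∏ l ∈ univ.erase j, b l.castSucc +
        a (Fin.last n) * ∏ j : Fin n, b j.castSucc := by
  have herase : ∀ {k} (c : Fin k → R) j,
      ∏ l ∈ univ.erase j, c l = ∏ l, Function.update c j 1 l := by
    intro k c j
    rw [prod_update_of_mem (mem_univ j), one_mul, sdiff_singleton_eq_erase]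
  simp only [herase, Fin.prod_univ_castSucc, Fin.sum_univ_castSucc, Function.update_apply,
    Fin.castSucc_inj, Fin.castSucc_ne_last, (Fin.castSucc_ne_last _).symm, if_false, if_true,
    mul_one, mul_sum]
  congr 1
  exact sum_congr rfl fun j _ => by ring

theorem mul_le_add_of_sub_mul_le {r k v T P : ℕ} (hk : k ≤ r) (hT : (r - k) * v ≤ T)
    (hP : v ≤ P) :
    r * v ≤ T + k * P := by
  obtain ⟨r', rfl⟩ := Nat.exists_eq_add_of_le' hk
  rw [Nat.add_sub_cancel] at hT
  calc (r' + k) * v = r' * v + k * v := add_mul _ _ _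
    _ ≤ T + k * P := by gcongr

theorem D_le_prod : ∀ (m : ℕ) (i : Fin m → ℕ) (r : ℕ) (s : Fin m → ℕ), D m i r s ≤ ∏ j, s j
  | 0, _, _, _ => by simp [D]
  | 1, _, _, _ => by simp [D]
  | m + 2, i, r, s => by
    rw [D]
    refine Finset.sup_le fun u hu => ?_
    obtain ⟨-, hS, -⟩ := mem_filter.1 hu
    calc _ ≤ (s (Fin.last (m + 1)) - ∑ k, u k) * ∏ j : Fin (m + 1), s j.castSucc +
          ∑ k, u k * ∏ j : Fin (m + 1), s j.castSucc := by
          gcongr with k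
          · exact D_le_prod _ _ _ _
          · split_ifs
            exacts [le_rfl, D_le_prod _ _ _ _]
      _ = ∏ j, s j := by
          rw [← sum_mul, ← add_mul, Nat.sub_add_cancel hS, mul_comm, Fin.prod_univ_castSucc s]

theorem mul_D_summand_le {r S I T P : ℕ} {d : ℕ → ℕ} (hdT : ∀ r', r' * d r' ≤ T)
    (hdP : ∀ r', d r' ≤ P) {u : Fin r → ℕ} (hS : ∑ k, u k ≤ S)
    (hI : ∑ k : Fin r, ((k : ℕ) + 1) * u k ≤ I) :
    r * ((S - ∑ k, u k) * d r +
        ∑ k : Fin r, u k * (if (k : ℕ) + 1 = r then P else d (r - ((k : ℕ) + 1)))) ≤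
      S * T + I * P := by
  have hterm : ∀ k : Fin r,
      r * (if (k : ℕ) + 1 = r then P else d (r - ((k : ℕ) + 1))) ≤ T + ((k : ℕ) + 1) * P := by
    intro k
    split_ifs with hk
    · exact mul_le_add_of_sub_mul_le k.isLt (by simp [hk]) le_rfl
    · exact mul_le_add_of_sub_mul_le k.isLt (hdT _) (hdP _)
  calc _ = (S - ∑ k, u k) * (r * d r) +
        ∑ k : Fin r, u k * (r * (if (k : ℕ) + 1 = r then P else d (r - ((k : ℕ) + 1)))) := by
        rw [mul_add, mul_sum, mul_left_comm]
        exact congrArg _ (sum_congr rfl fun k _ => mul_left_comm _ _ _)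
    _ ≤ (S - ∑ k, u k) * T + ∑ k : Fin r, u k * (T + ((k : ℕ) + 1) * P) := by
        gcongr with k
        exacts [hdT r, hterm k]
    _ = S * T + (∑ k : Fin r, ((k : ℕ) + 1) * u k) * P := by
        have hsum : ∑ k : Fin r, u k * (T + ((k : ℕ) + 1) * P) =
            (∑ k, u k) * T + (∑ k : Fin r, ((k : ℕ) + 1) * u k) * P := by
          rw [sum_mul, sum_mul, ← sum_add_distrib]
          exact sum_congr rfl fun k _ => by ring
        obtain ⟨e, rfl⟩ := Nat.exists_eq_add_of_le hS
        rw [hsum, Nat.add_sub_cancel_left]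
        ring
    _ ≤ S * T + I * P := by gcongr

theorem mul_D_le_sum (m : ℕ) (i : Fin (m + 1) → ℕ) (r : ℕ) (s : Fin (m + 1) → ℕ) :
    r * D (m + 1) i r s ≤ ∑ j, i j * ∏ l ∈ univ.erase j, s l := by
  induction m generalizing r with
  | zero =>
    simp only [D, Fin.isValue, Nat.reduceAdd, univ_unique, Fin.default_eq_zero, sum_singleton,
      erase_singleton, prod_empty, mul_one]
    exact (Nat.mul_le_mul_left r (min_le_left _ _)).trans (Nat.mul_div_le _ _)
  | succ m ih =>
    rw [D, Finset.mul_sup₀, Fin.sum_mul_prod_erase_castSucc]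
    refine Finset.sup_le fun u hu => ?_
    obtain ⟨-, hS, hI⟩ := mem_filter.1 hu
    exact mul_D_summand_le
      (d := fun r' => D (m + 1) (fun j => i j.castSucc) r' (fun j => s j.castSucc))
      (fun r' => ih _ r' _) (fun r' => D_le_prod _ _ r' _) hS hI

theorem D_le_schwartz_zippel_general {m : ℕ} (hm : 1 ≤ m) (i : Fin m → ℕ) (r : ℕ) (hr : 1 ≤ r)
    (s : Fin m → ℕ) :
    (D m i r s : ℚ) ≤
      (∑ j, (i j : ℚ) * ∏ l ∈ Finset.univ.erase j, (s l : ℚ)) / r := by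
  obtain ⟨m, rfl⟩ := Nat.exists_eq_add_of_le' hm
  rw [le_div_iff₀ (by exact_mod_cast hr), mul_comm]
  exact_mod_cast mul_D_le_sum m i r s

/-- The recursive bound `D` is at least as good as the Schwartz–Zippel
bound: `D(i_1, …, i_m, r, s_1, …, s_m) ≤ (i_1 s_2 ⋯ s_m + ⋯ + s_1 ⋯ s_{m−1} i_m)/r`. -/
theorem D_le_schwartz_zippel {m : ℕ} (hm : 1 ≤ m) (i : Fin m → ℕ) (r : ℕ) (hr : 1 ≤ r)
    (s : Fin m → ℕ) (hs : ∀ j, 1 ≤ s j) :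
    (D m i r s : ℚ) ≤
      (∑ j, (i j : ℚ) * ∏ l ∈ Finset.univ.erase j, (s l : ℚ)) / r :=
  D_le_schwartz_zippel_general hm i r hr s
end
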